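/- For any linear order on {E,D,N} with E < N, the sum of q^{maj(W)} over all Schröder paths from (0,0) to (n,n) with l steps (Delannoy paths never going above y=x) equals (1/[l-n+1]_q) · qbinom(2(l-n), l-n) · qbinom(l, 2n-l), where qbinom denotes the Gaussian binomial coefficient and [m]_q = 1+q+...+q^{m-1}. -/

import Mathlib

/-!
A Schröder `n`-path with `l` steps is a ballot word with `d = l - n` letters `E`, `d` letters `N`
and `e = 2n - l` letters `D`. Appending a letter `x` to a word ending in `y` adds the word's length
to `maj` exactly when `x` is ranked below `y`, so the `maj` generating functions of ballot words
with `a` E's, `b` N's and `c` D's, sorted by their last letter, satisfy a linear recursion. It is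
solved by closed forms in which the `E`/`N`-skeleton contributes a q-ballot polynomial and the
`D`'s a factor `qbinom (a + b + c - 1) c`; this is checked by q-Pascal identities, separately for
each position of `D` relative to `E < N`. Summing over the last letter gives
`qBallot d d * qbinom l e`, and `[d + 1] * qBallot d d = qbinom (2 d) d` is the q-Catalan identity.
-/

inductive Step : Type
  | E | D | N
deriving DecidableEq

instance : Fintype Step :=
  ⟨{Step.E, Step.D, Step.N}, by intro x; cases x <;> simp⟩

open Step Polynomial

/-- All words of length `l` over the step alphabet. -/
def Words (l : ℕ) : Finset (List Step) :=
  (Finset.univ : Finset (Fin l → Step)).image List.ofFn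

/-- Delannoy paths from (0,0) to (m,n) with `l` steps, encoded as words:
`#E + #D = m`, `#N + #D = n`, length `l`. -/
def DelSet (m n l : ℕ) : Finset (List Step) :=
  (Words l).filter fun w => w.count E + w.count D = m ∧ w.count N + w.count D = n

/-- A word is bad if some prefix contains more N's than E's. -/
def bad (w : List Step) : Bool :=
  (List.range (w.length + 1)).any fun k => (w.take k).count E < (w.take k).count N

/-- Bad Delannoy paths from (0,0) to (n,n) with `l` steps. -/
def BDelSet (n l : ℕ) : Finset (List Step) :=
  (DelSet n n l).filter fun w => bad w

/-- Schröder paths: Delannoy paths to (n,n) never going above the diagonal. -/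
def SchSet (n l : ℕ) : Finset (List Step) :=
  (DelSet n n l).filter fun w => ¬ bad w

/-- Major index of a word w_1 ⋯ w_l with respect to a ranking of the letters:
the sum of all positions i (1 ≤ i ≤ l-1) with w_i > w_{i+1}. -/
def maj (rank : Step → ℕ) (w : List Step) : ℕ :=
  ∑ i ∈ Finset.range (w.length - 1),
    if rank (w.getD (i + 1) E) < rank (w.getD i E) then i + 1 else 0

/-- q-integer [m] = 1 + q + ⋯ + q^{m-1}. -/
noncomputable def qint (m : ℕ) : Polynomial ℚ :=
  ∑ i ∈ Finset.range m, X ^ i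

/-- q-factorial. -/
noncomputable def qfact : ℕ → Polynomial ℚ
  | 0 => 1
  | m + 1 => qfact m * qint (m + 1)

/-- Gaussian binomial coefficient, via the q-Pascal recurrence. -/
noncomputable def qbinom : ℕ → ℕ → Polynomial ℚ
  | _, 0 => 1
  | 0, _ + 1 => 0
  | m + 1, k + 1 => qbinom m k + X ^ (k + 1) * qbinom m (k + 1)

/-- q-trinomial coefficient [l]!/([a]![b]![c]!), defined when a+b+c = l. -/
noncomputable def qbinom3 (l a b c : ℕ) : Polynomial ℚ :=
  if a + b + c = l then qbinom l a * qbinom (l - a) b else 0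

/-- Depth after the first `i` steps: #N − #E. -/
def depth (w : List Step) (i : ℕ) : ℤ :=
  ((w.take i).count N : ℤ) - (w.take i).count E

/-- `k` (0 ≤ k ≤ l) achieves the maximal running depth. -/
def isMaxDepth (w : List Step) (k : ℕ) : Bool :=
  (List.range (w.length + 1)).all fun i => decide (depth w i ≤ depth w k)

/-- The first index (number of steps) at which the running depth is maximal. -/
def firstDeep (w : List Step) : ℕ :=
  (List.range (w.length + 1)).findIdx (isMaxDepth w)

/-- The last index at which the running depth is maximal. -/
def lastDeep (w : List Step) : ℕ :=
  w.length - (List.range (w.length + 1)).reverse.findIdx (isMaxDepth w)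

/-- Replace the first deepest step (the step w_k, k = firstDeep) with E. -/
def phi (w : List Step) : List Step := w.set (firstDeep w - 1) E

/-- Replace the step following the last deepest point with N. -/
def phiInv (w : List Step) : List Step := w.set (lastDeep w) N

/-- Number of consecutive D's immediately after the first deepest step. -/
def runS (w : List Step) : ℕ := ((w.drop (firstDeep w)).takeWhile (· == D)).length

/-- Number of consecutive D's immediately before the first deepest step. -/
def runR (w : List Step) : ℕ :=
  ((w.take (firstDeep w - 1)).reverse.takeWhile (· == D)).length

/-- The window map: replace W₁ = D^r w_k D^s by D^{r-1} E D^{s+1} if r ≥ 1,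
and by D^s E if r = 0. -/
def phiWin (w : List Step) : List Step :=
  let k := firstDeep w - 1
  let r := runR w
  let s := runS w
  let seg : List Step :=
    if 1 ≤ r then List.replicate (r - 1) D ++ [E] ++ List.replicate (s + 1) D
    else List.replicate s D ++ [E]
  w.take (k - r) ++ seg ++ w.drop (k + s + 1)

/-- 0-based index of the first step after which the path is above the diagonal. -/
def firstAbove (w : List Step) : ℕ :=
  (List.range w.length).findIdx fun i =>
    decide ((w.take (i + 1)).count E < (w.take (i + 1)).count N)

/-- The map ψ of Bonin–Shapiro–Simion: replace with E the last N of the maximal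
run of consecutive N's beginning at the first step going above the diagonal. -/
def psi (w : List Step) : List Step :=
  let i := firstAbove w
  let j := i + ((w.drop i).takeWhile (· == N)).length - 1
  w.set j E

lemma qbinom_zero_right (m : ℕ) : qbinom m 0 = 1 := by cases m <;> rfl

lemma qbinom_succ_succ (m k : ℕ) :
    qbinom (m + 1) (k + 1) = qbinom m k + X ^ (k + 1) * qbinom m (k + 1) := rfl

lemma qbinom_eq_zero_of_lt {m k : ℕ} (h : m < k) : qbinom m k = 0 := by
  induction m generalizing k with
  | zero => obtain ⟨k, rfl⟩ := Nat.exists_eq_add_one_of_ne_zero (by omega : k ≠ 0); rfl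
  | succ m ih =>
    obtain ⟨k, rfl⟩ := Nat.exists_eq_add_one_of_ne_zero (by omega : k ≠ 0)
    rw [qbinom_succ_succ, ih (by omega), ih (by omega), mul_zero, add_zero]

lemma qbinom_self (m : ℕ) : qbinom m m = 1 := by
  induction m with
  | zero => rfl
  | succ m ih => rw [qbinom_succ_succ, ih, qbinom_eq_zero_of_lt (by omega), mul_zero, add_zero]

lemma qint_zero : qint 0 = 0 := Finset.sum_range_zero _

lemma qint_mul_X_sub_one (m : ℕ) : qint m * (X - 1) = X ^ m - 1 := geom_sum_mul X m

lemma qint_add (p q : ℕ) : qint (p + q) = qint p + X ^ p * qint q := by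
  simp only [qint, Finset.sum_range_add, pow_add, Finset.mul_sum]

lemma qint_succ_ne_zero (m : ℕ) : qint (m + 1) ≠ 0 := by
  intro h
  have : (qint (m + 1)).coeff 0 = 1 := by simp [qint, Polynomial.finsetSum_coeff, coeff_X_pow]
  simp [h] at this

lemma qfact_ne_zero (m : ℕ) : qfact m ≠ 0 := by
  induction m with
  | zero => exact one_ne_zero
  | succ m ih => exact mul_ne_zero ih (qint_succ_ne_zero m)

lemma qbinom_mul_qfact_mul_qfact (m k : ℕ) :
    qbinom (m + k) k * (qfact k * qfact m) = qfact (m + k) := by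
  induction m generalizing k with
  | zero => simp [qbinom_self, qfact]
  | succ m ihm =>
    induction k with
    | zero => simp [qbinom_zero_right, qfact]
    | succ k ihk =>
      have h2 := ihm (k + 1)
      have hq := qint_add (k + 1) (m + 1)
      rw [show m + (k + 1) = m + 1 + k by omega] at h2
      rw [show k + 1 + (m + 1) = m + 1 + k + 1 by omega] at hq
      rw [show m + 1 + (k + 1) = m + 1 + k + 1 by omega, qbinom_succ_succ]
      simp only [qfact] at ihk h2 ⊢
      linear_combination qint (k + 1) * ihk + X ^ (k + 1) * qint (m + 1) * h2
        - qfact (m + 1 + k) * hq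

lemma qbinom_symm (m k : ℕ) : qbinom (m + k) m = qbinom (m + k) k := by
  refine mul_right_cancel₀ (mul_ne_zero (qfact_ne_zero k) (qfact_ne_zero m)) ?_
  rw [qbinom_mul_qfact_mul_qfact, mul_comm (qfact k), add_comm m k, qbinom_mul_qfact_mul_qfact]

lemma qbinom_succ_mul_qint (m k : ℕ) :
    qbinom (m + k) (k + 1) * qint (k + 1) = qbinom (m + k) k * qint m := by
  rcases m with _ | m
  · rw [qbinom_eq_zero_of_lt (by omega), qint_zero]; ring
  refine mul_right_cancel₀ (mul_ne_zero (qfact_ne_zero k) (qfact_ne_zero m)) ?_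
  have h1 := qbinom_mul_qfact_mul_qfact m (k + 1)
  have h2 := qbinom_mul_qfact_mul_qfact (m + 1) k
  rw [show m + (k + 1) = m + 1 + k by omega] at h1
  simp only [qfact] at h1 h2
  linear_combination h1 - h2

lemma qbinom_succ_succ' (s k : ℕ) :
    qbinom (s + k + 1) (k + 1) = X ^ s * qbinom (s + k) k + qbinom (s + k) (k + 1) := by
  rw [qbinom_succ_succ]
  linear_combination qbinom (s + k) k * qint_mul_X_sub_one s
    - qbinom (s + k) (k + 1) * qint_mul_X_sub_one (k + 1) + (X - 1) * qbinom_succ_mul_qint s k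

/-- For `b ≤ a`: the `maj` generating functions of the ballot words with `a` letters `E` and `b`
letters `N` (`qBallot`), of those ending in `E` or empty (`qBallotE`), and of those ending in `N`
(`qBallotN`). -/
noncomputable def qBallot : ℕ → ℕ → ℚ[X]
  | _, 0 => 1
  | a, b + 1 => qbinom (a + b + 1) (b + 1) - X * qbinom (a + b + 1) b

noncomputable def qBallotE : ℕ → ℕ → ℚ[X]
  | _, 0 => 1
  | a, b + 1 => X ^ (b + 1) * (qbinom (a + b) (b + 1) - qbinom (a + b) b)

noncomputable def qBallotN : ℕ → ℕ → ℚ[X]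
  | _, 0 => 0
  | a, b + 1 => qBallot a b

lemma qBallotE_add_qBallotN (a b : ℕ) : qBallotE a b + qBallotN a b = qBallot a b := by
  rcases b with _ | _ | b
  · simp [qBallotE, qBallotN, qBallot]
  · simp only [qBallotE, qBallotN, qBallot, zero_add, pow_one, add_zero, mul_one,
      qbinom_zero_right, qbinom_succ_succ a 0]
    ring
  · simp only [qBallotE, qBallotN, qBallot]
    rw [show a + (b + 1) = a + b + 1 by omega, qbinom_succ_succ (a + b + 1) (b + 1),
      qbinom_succ_succ (a + b + 1) b]
    ring

lemma qBallotE_succ_left (a b : ℕ) :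
    qBallotE (a + 1) b = qBallotE a b + X ^ (a + b) * qBallotN a b := by
  rcases b with _ | _ | b
  · simp [qBallotE, qBallotN]
  · have h := qbinom_succ_succ' a 0
    simp only [add_zero, qbinom_zero_right, mul_one] at h
    simp only [qBallotE, qBallotN, qBallot, zero_add, pow_one, add_zero, mul_one,
      qbinom_zero_right, h]
    ring
  · have hA := qbinom_succ_succ' a (b + 1)
    have hB := qbinom_succ_succ' (a + 1) b
    simp only [qBallotE, qBallotN, qBallot]
    simp only [show a + (b + 1) = a + b + 1 by omega, show a + 1 + b = a + b + 1 by omega,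
      show a + 1 + (b + 1) = a + b + 1 + 1 by omega] at hA hB ⊢
    rw [hA, hB]
    ring

lemma qBallotE_succ_self (a : ℕ) : qBallotE (a + 1) (a + 1) = 0 := by
  simp only [qBallotE]
  rw [qbinom_symm (a + 1) a, sub_self, mul_zero]

/-- The q-Catalan identity. -/
lemma qint_mul_qBallot_self (d : ℕ) : qint (d + 1) * qBallot d d = qbinom (2 * d) d := by
  rcases d with _ | d
  · simp [qint, qBallot, qbinom_zero_right]
  have key := qbinom_succ_mul_qint (d + 2) d
  have hq : qint (d + 2) = 1 + X * qint (d + 1) := by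
    rw [show d + 2 = 1 + (d + 1) by omega, qint_add]
    simp [qint]
  simp only [qBallot]
  rw [show d + 2 + d = d + 1 + d + 1 by omega] at key
  rw [show 2 * (d + 1) = d + 1 + d + 1 by omega]
  linear_combination qbinom (d + 1 + d + 1) (d + 1) * hq + X * key

/-- The empty word counts as ending in `E`; this makes the last-letter recursion uniform. -/
def lastStep (w : List Step) : Step := w.getLastD E

def ballotWords (a b c : ℕ) : Finset (List Step) :=
  (Words (a + b + c)).filter
    fun w => w.count E = a ∧ w.count N = b ∧ w.count D = c ∧ bad w = false

lemma mem_Words {w : List Step} {l : ℕ} : w ∈ Words l ↔ w.length = l := by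
  constructor
  · intro h
    obtain ⟨f, -, rfl⟩ := Finset.mem_image.1 h
    exact List.length_ofFn
  · rintro rfl
    exact Finset.mem_image.2 ⟨w.get, Finset.mem_univ _, List.ofFn_get w⟩

lemma count_E_add_count_N_add_count_D (w : List Step) :
    w.count E + w.count N + w.count D = w.length := by
  induction w with
  | nil => rfl
  | cons x w ih =>
    cases x <;> simp only [List.count_cons_self, List.count_cons_of_ne, ne_eq, reduceCtorEq,
      not_false_eq_true, List.length_cons] <;> omega

lemma mem_ballotWords {w : List Step} {a b c : ℕ} :
    w ∈ ballotWords a b c ↔ w.count E = a ∧ w.count N = b ∧ w.count D = c ∧ bad w = false := by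
  rw [ballotWords, Finset.mem_filter, mem_Words, and_iff_right_iff_imp]
  rintro ⟨rfl, rfl, rfl, -⟩
  exact (count_E_add_count_N_add_count_D w).symm

lemma bad_eq_false_iff {w : List Step} :
    bad w = false ↔ ∀ k, (w.take k).count N ≤ (w.take k).count E := by
  simp only [bad, List.any_eq_false, List.mem_range, decide_eq_true_eq, not_lt]
  refine ⟨fun h k => ?_, fun h k _ => h k⟩
  rcases le_or_gt k w.length with hk | hk
  · exact h k (by omega)
  · simpa [List.take_of_length_le hk.le] using h w.length (by omega)

lemma count_N_le_count_E {w : List Step} (h : bad w = false) : w.count N ≤ w.count E := by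
  simpa using bad_eq_false_iff.1 h w.length

lemma bad_append_singleton_eq_false_iff {u : List Step} {x : Step} :
    bad (u ++ [x]) = false ↔ bad u = false ∧ (u ++ [x]).count N ≤ (u ++ [x]).count E := by
  simp only [bad_eq_false_iff]
  refine ⟨fun h => ⟨fun k => ?_, by simpa only [List.take_length] using h (u ++ [x]).length⟩,
    fun ⟨hu, hux⟩ k => ?_⟩
  · rcases le_or_gt k u.length with hk | hk
    · simpa [List.take_append_of_le_length hk] using h k
    · simpa [List.take_of_length_le hk.le] using h u.length
  · rcases le_or_gt k u.length with hk | hk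
    · simpa [List.take_append_of_le_length hk] using hu k
    · rwa [List.take_of_length_le (by simp; omega)]

lemma ballotWords_eq_empty {a b c : ℕ} (h : a < b) : ballotWords a b c = ∅ := by
  refine Finset.eq_empty_of_forall_notMem fun w hw => ?_
  obtain ⟨rfl, rfl, -, hw⟩ := mem_ballotWords.1 hw
  exact absurd (count_N_le_count_E hw) (not_le.2 h)

lemma ballotWords_zero : ballotWords 0 0 0 = {[]} := by
  ext w
  rw [mem_ballotWords, Finset.mem_singleton]
  constructor
  · rintro ⟨h1, h2, h3, -⟩
    have := count_E_add_count_N_add_count_D w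
    exact List.length_eq_zero_iff.1 (by omega)
  · rintro rfl
    exact ⟨rfl, rfl, rfl, rfl⟩

lemma append_singleton_mem_ballotWords_iff {u : List Step} (x : Step) {a b c a' b' c' : ℕ}
    (ha : a' = a + if x = E then 1 else 0) (hb : b' = b + if x = N then 1 else 0)
    (hc : c' = c + if x = D then 1 else 0) (hba : b' ≤ a') :
    u ++ [x] ∈ ballotWords a' b' c' ↔ u ∈ ballotWords a b c := by
  simp only [mem_ballotWords, bad_append_singleton_eq_false_iff, List.count_append,
    List.count_singleton, beq_iff_eq]
  subst ha hb hc
  cases x <;> simp only [reduceCtorEq, if_true, if_false] at hba ⊢ <;>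
    exact ⟨fun ⟨h1, h2, h3, h4, _⟩ => ⟨by omega, by omega, by omega, h4⟩,
      fun ⟨h1, h2, h3, h4⟩ => ⟨by omega, by omega, by omega, h4, by omega⟩⟩

lemma maj_append_singleton (rank : Step → ℕ) (u : List Step) (x : Step) :
    maj rank (u ++ [x]) = maj rank u + if rank x < rank (lastStep u) then u.length else 0 := by
  rcases List.eq_nil_or_concat' u with rfl | ⟨v, y, rfl⟩
  · simp [maj]
  simp only [maj, lastStep, List.getLastD_concat, List.length_append, List.length_singleton,
    Nat.add_sub_cancel, Finset.sum_range_succ]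
  congr 1
  · refine Finset.sum_congr rfl fun i hi => ?_
    rw [Finset.mem_range] at hi
    rw [List.getD_append (v ++ [y]) [x] E i (by simp; omega),
      List.getD_append (v ++ [y]) [x] E (i + 1) (by simp; omega)]
  · simp

lemma Step.sum_univ {M : Type*} [AddCommMonoid M] (f : Step → M) :
    ∑ y, f y = f E + f D + f N := by
  simp [Finset.univ, Fintype.elems, add_assoc]

lemma rank_order_cases {rank : Step → ℕ} (hinj : Function.Injective rank)
    (hEN : rank E < rank N) :
    (rank D < rank E ∧ rank E < rank N ∧ rank D < rank N) ∨
      (rank E < rank D ∧ rank D < rank N ∧ rank E < rank N) ∨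
      (rank E < rank N ∧ rank N < rank D ∧ rank E < rank D) := by
  have hDE : rank D ≠ rank E := hinj.ne (by decide)
  have hDN : rank D ≠ rank N := hinj.ne (by decide)
  omega

section GeneratingFunctions

variable (rank : Step → ℕ)

noncomputable def descentWeight (x y : Step) (L : ℕ) : ℚ[X] :=
  if rank x < rank y then X ^ L else 1

noncomputable def lastGF (a b c : ℕ) (y : Step) : ℚ[X] :=
  ∑ w ∈ (ballotWords a b c).filter (lastStep · = y), X ^ maj rank w

lemma sum_ballotWords_eq_sum_lastGF (a b c : ℕ) :
    ∑ w ∈ ballotWords a b c, (X : ℚ[X]) ^ maj rank w = ∑ y, lastGF rank a b c y :=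
  (Finset.sum_fiberwise _ _ _).symm

lemma sum_ballotWords_pow_maj_append (a b c : ℕ) (x : Step) :
    ∑ u ∈ ballotWords a b c, (X : ℚ[X]) ^ maj rank (u ++ [x]) =
      ∑ y, descentWeight rank x y (a + b + c) * lastGF rank a b c y := by
  rw [← Finset.sum_fiberwise (ballotWords a b c) lastStep]
  refine Finset.sum_congr rfl fun y _ => ?_
  rw [lastGF, Finset.mul_sum]
  refine Finset.sum_congr rfl fun u hu => ?_
  obtain ⟨hmem, rfl⟩ := Finset.mem_filter.1 hu
  obtain ⟨rfl, rfl, rfl, -⟩ := mem_ballotWords.1 hmem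
  rw [maj_append_singleton, count_E_add_count_N_add_count_D, descentWeight]
  split_ifs <;> ring

lemma lastGF_eq_sum_append (x : Step) {a b c a' b' c' : ℕ}
    (ha : a' = a + if x = E then 1 else 0) (hb : b' = b + if x = N then 1 else 0)
    (hc : c' = c + if x = D then 1 else 0) (hba : b' ≤ a') :
    lastGF rank a' b' c' x = ∑ u ∈ ballotWords a b c, (X : ℚ[X]) ^ maj rank (u ++ [x]) := by
  have himage : (ballotWords a' b' c').filter (lastStep · = x) =
      (ballotWords a b c).image (· ++ [x]) := by
    ext w
    simp only [Finset.mem_filter, Finset.mem_image]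
    rcases List.eq_nil_or_concat' w with rfl | ⟨u, y, rfl⟩
    · simp only [List.append_eq_nil_iff, List.cons_ne_nil, and_false, exists_false, iff_false,
        not_and, mem_ballotWords, List.count_nil]
      rintro ⟨rfl, rfl, rfl, -⟩
      cases x <;> simp at ha hb hc
    · simp only [lastStep, List.getLastD_concat]
      constructor
      · rintro ⟨hw, rfl⟩
        exact ⟨u, (append_singleton_mem_ballotWords_iff y ha hb hc hba).1 hw, rfl⟩
      · rintro ⟨v, hv, h⟩
        obtain ⟨rfl, hxy⟩ := List.append_inj' h rfl
        obtain rfl : x = y := List.singleton_inj.1 hxy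
        exact ⟨(append_singleton_mem_ballotWords_iff x ha hb hc hba).2 hv, rfl⟩
  rw [lastGF, himage, Finset.sum_image fun u _ v _ h => List.append_cancel_right h]

lemma lastGF_eq_zero {x : Step} {a b c : ℕ} (hx : ∀ w ∈ ballotWords a b c, x ∉ w)
    (hn : a + b + c ≠ 0) : lastGF rank a b c x = 0 := by
  refine Finset.sum_eq_zero fun w hw => ?_
  obtain ⟨hmem, rfl⟩ := Finset.mem_filter.1 hw
  rcases List.eq_nil_or_concat' w with rfl | ⟨u, y, rfl⟩
  · obtain ⟨rfl, rfl, rfl, -⟩ := mem_ballotWords.1 hmem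
    simp at hn
  · exact absurd (by simp [lastStep]) (hx _ hmem)

-- `a + b + c - 1` is the length without the last letter (its truncation at `0` is harmless).
noncomputable def lastGFClosed : ℕ → ℕ → ℕ → Step → ℚ[X]
  | a, b, c, E => descentWeight rank E D c * qBallotE a b * qbinom (a + b + c - 1) c
  | a, b, c, N => descentWeight rank N D c * qBallotN a b * qbinom (a + b + c - 1) c
  | _, _, 0, D => 0
  | a, b, c + 1, D => (descentWeight rank D E (a + b) * qBallotE a b
      + descentWeight rank D N (a + b) * qBallotN a b) * qbinom (a + b + c) c

lemma lastGF_eq_lastGFClosed_of_append (x : Step) {a b c a' b' c' : ℕ}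
    (ha : a' = a + if x = E then 1 else 0) (hb : b' = b + if x = N then 1 else 0)
    (hc : c' = c + if x = D then 1 else 0) (hba : b' ≤ a')
    (ih : lastGF rank a b c = lastGFClosed rank a b c)
    (hrec : lastGFClosed rank a' b' c' x =
      ∑ y, descentWeight rank x y (a + b + c) * lastGFClosed rank a b c y) :
    lastGF rank a' b' c' x = lastGFClosed rank a' b' c' x := by
  rw [lastGF_eq_sum_append rank x ha hb hc hba, sum_ballotWords_pow_maj_append, ih, hrec]

variable {rank}

lemma lastGFClosed_succ_E (hinj : Function.Injective rank) (hEN : rank E < rank N) (A b c : ℕ) :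
    lastGFClosed rank (A + 1) b c E =
      ∑ y, descentWeight rank E y (A + b + c) * lastGFClosed rank A b c y := by
  rw [Step.sum_univ]
  rcases c with _ | C
  · simp [lastGFClosed, descentWeight, hEN, qbinom_zero_right, qBallotE_succ_left]
  have hP1 := qbinom_succ_succ (A + b + C) C
  have hP2 := qbinom_succ_succ' (A + b) C
  have hR1 := qBallotE_succ_left A b
  simp only [lastGFClosed, show A + 1 + b + (C + 1) - 1 = A + b + C + 1 by omega,
    Nat.add_sub_cancel, show A + b + (C + 1) = A + b + C + 1 by omega]
  rcases rank_order_cases hinj hEN with ⟨h1, h2, h3⟩ | ⟨h1, h2, h3⟩ | ⟨h1, h2, h3⟩ <;>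
    simp only [descentWeight, lt_irrefl, h1, h2, h3, lt_asymm h1, lt_asymm h2, lt_asymm h3,
      if_true, if_false]
  · linear_combination qbinom (A + b + C + 1) (C + 1) * hR1
      + (qBallotE A b + X ^ (A + b) * qBallotN A b) * hP2 - X ^ (A + b) * qBallotN A b * (hP2 - hP1)
  · linear_combination X ^ (C + 1) * qbinom (A + b + C + 1) (C + 1) * hR1
      + X ^ (C + 1) * (qBallotE A b + X ^ (A + b) * qBallotN A b) * hP2
  · linear_combination X ^ (C + 1) * qbinom (A + b + C + 1) (C + 1) * hR1
      + X ^ (C + 1) * (qBallotE A b + X ^ (A + b) * qBallotN A b) * hP2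
      - X ^ (A + b + C + 1) * qBallotN A b * (hP2 - hP1)

lemma lastGFClosed_succ_N (hinj : Function.Injective rank) (hEN : rank E < rank N) (a B c : ℕ) :
    lastGFClosed rank a (B + 1) c N =
      ∑ y, descentWeight rank N y (a + B + c) * lastGFClosed rank a B c y := by
  rw [Step.sum_univ]
  rcases c with _ | C
  · simp [lastGFClosed, descentWeight, lt_asymm hEN, qbinom_zero_right, qBallotN,
      ← qBallotE_add_qBallotN a B]
  have hP1 := qbinom_succ_succ (a + B + C) C
  have hP2 := qbinom_succ_succ' (a + B) C
  have hR2 := qBallotE_add_qBallotN a B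
  have hN : qBallotN a (B + 1) = qBallot a B := rfl
  simp only [lastGFClosed, hN, show a + (B + 1) + (C + 1) - 1 = a + B + C + 1 by omega,
    Nat.add_sub_cancel, show a + B + (C + 1) = a + B + C + 1 by omega]
  rcases rank_order_cases hinj hEN with ⟨h1, h2, h3⟩ | ⟨h1, h2, h3⟩ | ⟨h1, h2, h3⟩ <;>
    simp only [descentWeight, lt_irrefl, h1, h2, h3, lt_asymm h1, lt_asymm h2, lt_asymm h3,
      if_true, if_false]
  · linear_combination qBallot a B * hP2
      - (qbinom (a + B + C) (C + 1) + X ^ (a + B) * qbinom (a + B + C) C) * hR2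
  · linear_combination qBallot a B * hP2
      - (qbinom (a + B + C) (C + 1) + X ^ (a + B) * qbinom (a + B + C) C) * hR2
      - qBallotE a B * (hP2 - hP1)
  · linear_combination X ^ (C + 1) * qBallot a B * hP2
      - X ^ (C + 1) * (qbinom (a + B + C) (C + 1) + X ^ (a + B) * qbinom (a + B + C) C) * hR2

lemma lastGFClosed_succ_D (hinj : Function.Injective rank) (hEN : rank E < rank N) (a b c : ℕ) :
    lastGFClosed rank a b (c + 1) D =
      ∑ y, descentWeight rank D y (a + b + c) * lastGFClosed rank a b c y := by
  rw [Step.sum_univ]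
  rcases c with _ | C
  · simp [lastGFClosed, descentWeight, qbinom_zero_right]
  have hP1 := qbinom_succ_succ (a + b + C) C
  simp only [lastGFClosed, Nat.add_sub_cancel,
    show a + b + (C + 1) = a + b + C + 1 by omega]
  rcases rank_order_cases hinj hEN with ⟨h1, h2, h3⟩ | ⟨h1, h2, h3⟩ | ⟨h1, h2, h3⟩ <;>
    simp only [descentWeight, lt_irrefl, h1, h2, h3, lt_asymm h1, lt_asymm h2, lt_asymm h3,
      if_true, if_false]
  · linear_combination X ^ (a + b) * (qBallotE a b + qBallotN a b) * hP1
  · linear_combination (qBallotE a b + X ^ (a + b) * qBallotN a b) * hP1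
  · linear_combination (qBallotE a b + qBallotN a b) * hP1

lemma sum_lastGFClosed (hinj : Function.Injective rank) (hEN : rank E < rank N) (a b c : ℕ) :
    ∑ y, lastGFClosed rank a b c y = qBallot a b * qbinom (a + b + c) c := by
  rw [Step.sum_univ, ← qBallotE_add_qBallotN]
  rcases c with _ | C
  · simp [lastGFClosed, descentWeight, qbinom_zero_right]
  have hP1 := qbinom_succ_succ (a + b + C) C
  have hP2 := qbinom_succ_succ' (a + b) C
  simp only [lastGFClosed, Nat.add_sub_cancel,
    show a + b + (C + 1) = a + b + C + 1 by omega]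
  rcases rank_order_cases hinj hEN with ⟨h1, h2, h3⟩ | ⟨h1, h2, h3⟩ | ⟨h1, h2, h3⟩ <;>
    simp only [descentWeight, h1, h2, h3, lt_asymm h1, lt_asymm h2, lt_asymm h3,
      if_true, if_false]
  · linear_combination -(qBallotE a b + qBallotN a b) * hP2
  · linear_combination -qBallotE a b * hP1 - qBallotN a b * hP2
  · linear_combination -(qBallotE a b + qBallotN a b) * hP1

lemma lastGF_eq_lastGFClosed (hinj : Function.Injective rank) (hEN : rank E < rank N) (n : ℕ) :
    ∀ a b c, a + b + c = n → b ≤ a → lastGF rank a b c = lastGFClosed rank a b c := by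
  induction n with
  | zero =>
    intro a b c hn _
    obtain ⟨rfl, rfl, rfl⟩ : a = 0 ∧ b = 0 ∧ c = 0 := by omega
    funext y
    cases y <;> simp [lastGF, Finset.sum_filter, ballotWords_zero, lastStep, lastGFClosed, maj,
      descentWeight, qBallotE, qBallotN, qbinom_zero_right]
  | succ n ih =>
    intro a b c hn hba
    funext y
    cases y
    · rcases a with _ | A
      · obtain rfl : b = 0 := by omega
        rw [lastGF_eq_zero rank (fun w hw => List.count_eq_zero.1 (mem_ballotWords.1 hw).1)
          (by omega)]
        simp [lastGFClosed, qbinom_eq_zero_of_lt (show c - 1 < c by omega)]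
      rcases Nat.lt_or_ge A b with hAb | hbA
      · obtain rfl : b = A + 1 := by omega
        rw [lastGF_eq_sum_append rank E (a := A) (b := A + 1) (c := c) (by simp) (by simp)
          (by simp) hba]
        simp [ballotWords_eq_empty hAb, lastGFClosed, qBallotE_succ_self]
      exact lastGF_eq_lastGFClosed_of_append rank E (by simp) (by simp) (by simp) hba
        (ih A b c (by omega) hbA) (lastGFClosed_succ_E hinj hEN A b c)
    · rcases c with _ | C
      · exact lastGF_eq_zero rank (fun w hw => List.count_eq_zero.1 (mem_ballotWords.1 hw).2.2.1)
          (by omega)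
      exact lastGF_eq_lastGFClosed_of_append rank D (by simp) (by simp) (by simp) hba
        (ih a b C (by omega) hba) (lastGFClosed_succ_D hinj hEN a b C)
    · rcases b with _ | B
      · rw [lastGF_eq_zero rank (fun w hw => List.count_eq_zero.1 (mem_ballotWords.1 hw).2.1)
          (by omega)]
        simp [lastGFClosed, qBallotN]
      exact lastGF_eq_lastGFClosed_of_append rank N (by simp) (by simp) (by simp) hba
        (ih a B c (by omega) (by omega)) (lastGFClosed_succ_N hinj hEN a B c)

theorem sum_ballotWords_pow_maj (hinj : Function.Injective rank) (hEN : rank E < rank N)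
    {a b c : ℕ} (hba : b ≤ a) :
    ∑ w ∈ ballotWords a b c, (X : ℚ[X]) ^ maj rank w = qBallot a b * qbinom (a + b + c) c := by
  rw [sum_ballotWords_eq_sum_lastGF, lastGF_eq_lastGFClosed hinj hEN _ a b c rfl hba,
    sum_lastGFClosed hinj hEN]

end GeneratingFunctions

lemma SchSet_eq_ballotWords (d e : ℕ) : SchSet (d + e) (d + e + d) = ballotWords d d e := by
  ext w
  have := count_E_add_count_N_add_count_D w
  simp only [SchSet, DelSet, Finset.mem_filter, mem_Words, mem_ballotWords, Bool.not_eq_true]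
  exact ⟨fun ⟨⟨_, _, _⟩, h⟩ => ⟨by omega, by omega, by omega, h⟩,
    fun ⟨_, _, _, h⟩ => ⟨⟨by omega, by omega, by omega⟩, h⟩⟩

/-- for any linear order with E < N, the maj generating function
over Schröder n-paths with l steps is
(1/[l-n+1]) · qbinom(2(l-n), l-n) · qbinom(l, 2n-l)
(stated with the denominator [l-n+1] cleared). -/
theorem maj_schroeder_EltN (n l : ℕ) (hnl : n ≤ l) (hl : l ≤ 2 * n)
    (rank : Step → ℕ) (hrank : Function.Injective rank) (hEN : rank E < rank N) :
    qint (l - n + 1) * ∑ w ∈ SchSet n l, (X : Polynomial ℚ) ^ maj rank w =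
      qbinom (2 * (l - n)) (l - n) * qbinom l (2 * n - l) := by
  obtain ⟨d, rfl⟩ : ∃ d, l = n + d := ⟨l - n, by omega⟩
  obtain ⟨e, rfl⟩ : ∃ e, n = d + e := ⟨n - d, by omega⟩
  rw [show d + e + d - (d + e) = d by omega, show 2 * (d + e) - (d + e + d) = e by omega,
    SchSet_eq_ballotWords, sum_ballotWords_pow_maj hrank hEN le_rfl, ← mul_assoc,
    qint_mul_qBallot_self, show d + d + e = d + e + d by omega]
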